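/- Let (S, +, ∘) be a dual weak brace in which the additive Clifford semigroup (S,+) is commutative. Then the right distributor D_r(S) is closed under +, under additive inversion, and under ∘ and ∘-inversion; in particular, D_r(S) is a two-sided dual weak subbrace of S. -/
import Mathlib


/-- A dual weak (left) brace: `(S,+)` and `(S,∘)` are inverse semigroups, `(S,∘)` is
Clifford, with `a ∘ (b + c) = a ∘ b - a + a ∘ c` and `a ∘ a⁻ = -a + a`. -/
structure DualWeakBrace (S : Type*) where
  add : S → S → S
  mul : S → S → S
  neg : S → S
  inv : S → S
  add_assoc : ∀ a b c, add (add a b) c = add a (add b c)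
  mul_assoc : ∀ a b c, mul (mul a b) c = mul a (mul b c)
  add_reg : ∀ a, add (add a (neg a)) a = a
  neg_reg : ∀ a, add (add (neg a) a) (neg a) = neg a
  neg_unique : ∀ a b, add (add a b) a = a → add (add b a) b = b → b = neg a
  mul_reg : ∀ a, mul (mul a (inv a)) a = a
  inv_reg : ∀ a, mul (mul (inv a) a) (inv a) = inv a
  inv_unique : ∀ a b, mul (mul a b) a = a → mul (mul b a) b = b → b = inv a
  clifford : ∀ a, mul a (inv a) = mul (inv a) a
  dist : ∀ a b c, mul a (add b c) = add (add (mul a b) (neg a)) (mul a c)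
  weak : ∀ a, mul a (inv a) = add (neg a) a

/-- The right distributor `D_r(S)`. -/
def DualWeakBrace.Dr {S : Type*} (B : DualWeakBrace S) : Set S :=
  {z | ∀ a b, B.mul (B.add a b) z = B.add (B.add (B.mul a z) (B.neg z)) (B.mul b z)}

/-- `σ_a^z(b) = -a∘z + a∘b∘z`. -/
def DualWeakBrace.sigma {S : Type*} (B : DualWeakBrace S) (z a b : S) : S :=
  B.add (B.neg (B.mul a z)) (B.mul (B.mul a b) z)

/-- `τ_b^z(a) = (σ_a^z(b))⁻ ∘ a ∘ b`. -/
def DualWeakBrace.tau {S : Type*} (B : DualWeakBrace S) (z b a : S) : S :=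
  B.mul (B.mul (B.inv (B.sigma z a b)) a) b

/-- The deformed map `r_z`. -/
def DualWeakBrace.rz {S : Type*} (B : DualWeakBrace S) (z : S) : S × S → S × S :=
  fun p => (B.sigma z p.1 p.2, B.tau z p.2 p.1)

/-- The map `ř_w(a,b) = (a∘b - a∘w + w, (a∘b - a∘w + w)⁻ ∘ a ∘ b)`. -/
def DualWeakBrace.rcheck {S : Type*} (B : DualWeakBrace S) (w : S) : S × S → S × S :=
  fun p =>
    (B.add (B.add (B.mul p.1 p.2) (B.neg (B.mul p.1 w))) w,
     B.mul (B.mul (B.inv (B.add (B.add (B.mul p.1 p.2) (B.neg (B.mul p.1 w))) w)) p.1) p.2)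

namespace DWBAux
variable {S : Type*} (B : DualWeakBrace S)

local infixl:65 " +. " => B.add
local infixl:70 " *. " => B.mul
local prefix:100 "-." => B.neg
local postfix:max "ᵛ" => B.inv

local instance : Std.Associative B.add := ⟨B.add_assoc⟩
local instance : Std.Associative B.mul := ⟨B.mul_assoc⟩

theorem inv_invo (x : S) : (xᵛ)ᵛ = x :=
  (B.inv_unique (xᵛ) x (B.inv_reg x) (B.mul_reg x)).symm

theorem neg_invo (x : S) : -.-.x = x :=
  (B.neg_unique (-.x) x (B.neg_reg x) (B.add_reg x)).symm

theorem add_E (x : S) : x +. (-.x +. x) = x := by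
  rw [← B.add_assoc]; exact B.add_reg x

theorem E_idem (x : S) : (-.x +. x) +. (-.x +. x) = -.x +. x := by
  calc (-.x +. x) +. (-.x +. x) = ((-.x +. x) +. -.x) +. x := by ac_rfl
    _ = -.x +. x := by rw [B.neg_reg]

theorem neg_add (hcomm : ∀ a b : S, B.add a b = B.add b a) (x y : S) :
    -.(x +. y) = -.x +. -.y := by
  haveI : Std.Commutative B.add := ⟨hcomm⟩
  refine (B.neg_unique (x +. y) (-.x +. -.y) ?_ ?_).symm
  · calc ((x +. y) +. (-.x +. -.y)) +. (x +. y)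
        = ((x +. -.x) +. x) +. ((y +. -.y) +. y) := by ac_rfl
      _ = x +. y := by rw [B.add_reg, B.add_reg]
  · calc ((-.x +. -.y) +. (x +. y)) +. (-.x +. -.y)
        = ((-.x +. x) +. -.x) +. ((-.y +. y) +. -.y) := by ac_rfl
      _ = -.x +. -.y := by rw [B.neg_reg, B.neg_reg]

theorem lam_neg (a b : S) : -.a +. a *. -.b = -.(-.a +. a *. b) := by
  have eq1 := B.dist a (b +. -.b) b
  rw [B.add_reg, B.dist a b (-.b)] at eq1
  have eq2 := B.dist a (-.b +. b) (-.b)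
  rw [B.neg_reg, B.dist a (-.b) b] at eq2
  refine B.neg_unique (-.a +. a *. b) (-.a +. a *. -.b) ?_ ?_
  · calc ((-.a +. a *. b) +. (-.a +. a *. -.b)) +. (-.a +. a *. b)
        = -.a +. ((((a *. b +. -.a) +. a *. -.b) +. -.a) +. a *. b) := by ac_rfl
      _ = -.a +. a *. b := by rw [← eq1]
  · calc ((-.a +. a *. -.b) +. (-.a +. a *. b)) +. (-.a +. a *. -.b)
        = -.a +. ((((a *. -.b +. -.a) +. a *. b) +. -.a) +. a *. -.b) := by ac_rfl
      _ = -.a +. a *. -.b := by rw [← eq2]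

end DWBAux

namespace DWBAux2
variable {S : Type*} (B : DualWeakBrace S)
local infixl:65 " +. " => B.add
local infixl:70 " *. " => B.mul
local prefix:100 "-." => B.neg
local postfix:max "ᵛ" => B.inv
local instance : Std.Associative B.add := ⟨B.add_assoc⟩
local instance : Std.Associative B.mul := ⟨B.mul_assoc⟩
open DWBAux

theorem mul_inv_idem (x : S) : (x *. xᵛ) *. (x *. xᵛ) = x *. xᵛ := by
  calc (x *. xᵛ) *. (x *. xᵛ) = ((x *. xᵛ) *. x) *. xᵛ := by ac_rfl
    _ = x *. xᵛ := by rw [B.mul_reg]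

theorem inv_mul_idem (x : S) : (xᵛ *. x) *. (xᵛ *. x) = xᵛ *. x := by
  calc (xᵛ *. x) *. (xᵛ *. x) = ((xᵛ *. x) *. xᵛ) *. x := by ac_rfl
    _ = xᵛ *. x := by rw [B.inv_reg]

theorem idem_self_inv {g : S} (hg : g *. g = g) : gᵛ = g := by
  refine (B.inv_unique g g ?_ ?_).symm <;> rw [hg, hg]

theorem idem_mul_idem {e f : S} (he : e *. e = e) (hf : f *. f = f) :
    (e *. f) *. (e *. f) = e *. f := by
  have hx1 : ((e *. f) *. (e *. f)ᵛ) *. (e *. f) = e *. f := B.mul_reg _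
  have hx2 : ((e *. f)ᵛ *. (e *. f)) *. (e *. f)ᵛ = (e *. f)ᵛ := B.inv_reg _
  have hgidem : ((f *. (e *. f)ᵛ) *. e) *. ((f *. (e *. f)ᵛ) *. e) = (f *. (e *. f)ᵛ) *. e := by
    calc ((f *. (e *. f)ᵛ) *. e) *. ((f *. (e *. f)ᵛ) *. e)
        = (f *. (((e *. f)ᵛ *. (e *. f)) *. (e *. f)ᵛ)) *. e := by ac_rfl
      _ = (f *. (e *. f)ᵛ) *. e := by rw [hx2]
  have h1 : ((e *. f) *. ((f *. (e *. f)ᵛ) *. e)) *. (e *. f) = e *. f := by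
    calc ((e *. f) *. ((f *. (e *. f)ᵛ) *. e)) *. (e *. f)
        = ((e *. (f *. f)) *. (e *. f)ᵛ) *. ((e *. e) *. f) := by ac_rfl
      _ = ((e *. f) *. (e *. f)ᵛ) *. (e *. f) := by rw [hf, he]
      _ = e *. f := hx1
  have h2 : (((f *. (e *. f)ᵛ) *. e) *. (e *. f)) *. ((f *. (e *. f)ᵛ) *. e)
      = (f *. (e *. f)ᵛ) *. e := by
    calc (((f *. (e *. f)ᵛ) *. e) *. (e *. f)) *. ((f *. (e *. f)ᵛ) *. e)
        = (f *. (((e *. f)ᵛ *. ((e *. e) *. (f *. f))) *. (e *. f)ᵛ)) *. e := by ac_rfl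
      _ = (f *. (((e *. f)ᵛ *. (e *. f)) *. (e *. f)ᵛ)) *. e := by rw [he, hf]
      _ = (f *. (e *. f)ᵛ) *. e := by rw [hx2]
  have hgx : (f *. (e *. f)ᵛ) *. e = (e *. f)ᵛ := B.inv_unique _ _ h1 h2
  have hxidem : (e *. f)ᵛ *. (e *. f)ᵛ = (e *. f)ᵛ := by rw [← hgx]; exact hgidem
  have hef : e *. f = (e *. f)ᵛ := by
    conv_lhs => rw [← inv_invo B (e *. f)]
    rw [idem_self_inv B hxidem]
  calc (e *. f) *. (e *. f) = (e *. f)ᵛ *. (e *. f)ᵛ := by rw [← hef]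
    _ = (e *. f)ᵛ := hxidem
    _ = e *. f := hef.symm

theorem idem_comm {e f : S} (he : e *. e = e) (hf : f *. f = f) : e *. f = f *. e := by
  have hef := idem_mul_idem B he hf
  have hfe := idem_mul_idem B hf he
  have h1 : ((e *. f) *. (f *. e)) *. (e *. f) = e *. f := by
    calc ((e *. f) *. (f *. e)) *. (e *. f)
        = (e *. (f *. f)) *. ((e *. e) *. f) := by ac_rfl
      _ = (e *. f) *. (e *. f) := by rw [hf, he]
      _ = e *. f := hef
  have h2 : ((f *. e) *. (e *. f)) *. (f *. e) = f *. e := by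
    calc ((f *. e) *. (e *. f)) *. (f *. e)
        = (f *. (e *. e)) *. ((f *. f) *. e) := by ac_rfl
      _ = (f *. e) *. (f *. e) := by rw [he, hf]
      _ = f *. e := hfe
  have := B.inv_unique (e *. f) (f *. e) h1 h2
  rw [this, idem_self_inv B hef]

theorem idem_conj {e : S} (he : e *. e = e) (x : S) :
    (x *. e) *. xᵛ = e *. (xᵛ *. x) := by
  have hxxi : (xᵛ *. x) *. (xᵛ *. x) = xᵛ *. x := inv_mul_idem B x
  have ha : ((x *. e) *. (e *. xᵛ)) *. (x *. e) = x *. e := by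
    calc ((x *. e) *. (e *. xᵛ)) *. (x *. e)
        = (x *. ((e *. e) *. (xᵛ *. x))) *. e := by ac_rfl
      _ = (x *. (e *. (xᵛ *. x))) *. e := by rw [he]
      _ = (x *. ((xᵛ *. x) *. e)) *. e := by rw [idem_comm B he hxxi]
      _ = ((x *. xᵛ) *. x) *. (e *. e) := by ac_rfl
      _ = x *. e := by rw [B.mul_reg, he]
  have hb : ((e *. xᵛ) *. (x *. e)) *. (e *. xᵛ) = e *. xᵛ := by
    calc ((e *. xᵛ) *. (x *. e)) *. (e *. xᵛ)
        = (e *. ((xᵛ *. x) *. (e *. e))) *. xᵛ := by ac_rfl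
      _ = (e *. ((xᵛ *. x) *. e)) *. xᵛ := by rw [he]
      _ = (e *. (e *. (xᵛ *. x))) *. xᵛ := by rw [idem_comm B he hxxi]
      _ = ((e *. e) *. ((xᵛ *. x) *. xᵛ)) := by ac_rfl
      _ = e *. xᵛ := by rw [he, B.inv_reg]
  have hinv : (x *. e)ᵛ = e *. xᵛ := (B.inv_unique _ _ ha hb).symm
  have hcl := B.clifford (x *. e)
  rw [hinv] at hcl
  calc (x *. e) *. xᵛ
      = (x *. (e *. e)) *. xᵛ := by rw [he]
    _ = (x *. e) *. (e *. xᵛ) := by ac_rfl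
    _ = (e *. xᵛ) *. (x *. e) := hcl
    _ = e *. ((xᵛ *. x) *. e) := by ac_rfl
    _ = e *. (e *. (xᵛ *. x)) := by rw [idem_comm B he hxxi]
    _ = (e *. e) *. (xᵛ *. x) := by ac_rfl
    _ = e *. (xᵛ *. x) := by rw [he]

theorem idem_central {e : S} (he : e *. e = e) (x : S) : e *. x = x *. e := by
  have hxx' : (x *. xᵛ) *. (x *. xᵛ) = x *. xᵛ := mul_inv_idem B x
  have hconj' : (xᵛ *. e) *. x = e *. (x *. xᵛ) := by
    have h := idem_conj B he (xᵛ)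
    rw [inv_invo B x] at h
    exact h
  calc e *. x
      = e *. ((x *. xᵛ) *. x) := by rw [B.mul_reg]
    _ = (e *. (x *. xᵛ)) *. x := by ac_rfl
    _ = ((x *. xᵛ) *. e) *. x := by rw [idem_comm B he hxx']
    _ = x *. ((xᵛ *. e) *. x) := by ac_rfl
    _ = x *. (e *. (x *. xᵛ)) := by rw [hconj']
    _ = x *. ((x *. xᵛ) *. e) := by rw [idem_comm B he hxx']
    _ = (x *. (x *. xᵛ)) *. e := by ac_rfl
    _ = (x *. (xᵛ *. x)) *. e := by rw [B.clifford x]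
    _ = x *. e := by rw [← B.mul_assoc, B.mul_reg]

theorem inv_mul (x y : S) : (x *. y)ᵛ = yᵛ *. xᵛ := by
  have hyy := mul_inv_idem B y
  have hxx := inv_mul_idem B x
  have ha : ((x *. y) *. (yᵛ *. xᵛ)) *. (x *. y) = x *. y := by
    calc ((x *. y) *. (yᵛ *. xᵛ)) *. (x *. y)
        = x *. (((y *. yᵛ) *. (xᵛ *. x)) *. y) := by ac_rfl
      _ = x *. (((xᵛ *. x) *. (y *. yᵛ)) *. y) := by rw [idem_comm B hyy hxx]
      _ = ((x *. xᵛ) *. x) *. ((y *. yᵛ) *. y) := by ac_rfl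
      _ = x *. y := by rw [B.mul_reg, B.mul_reg]
  have hb : ((yᵛ *. xᵛ) *. (x *. y)) *. (yᵛ *. xᵛ) = yᵛ *. xᵛ := by
    calc ((yᵛ *. xᵛ) *. (x *. y)) *. (yᵛ *. xᵛ)
        = yᵛ *. (((xᵛ *. x) *. (y *. yᵛ)) *. xᵛ) := by ac_rfl
      _ = yᵛ *. (((y *. yᵛ) *. (xᵛ *. x)) *. xᵛ) := by rw [idem_comm B hxx hyy]
      _ = ((yᵛ *. y) *. yᵛ) *. ((xᵛ *. x) *. xᵛ) := by ac_rfl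
      _ = yᵛ *. xᵛ := by rw [B.inv_reg, B.inv_reg]
  exact (B.inv_unique _ _ ha hb).symm

theorem idem_E {g : S} (hg : g *. g = g) : -.g +. g = g := by
  have h := B.weak g
  rw [idem_self_inv B hg, hg] at h
  exact h.symm

theorem idem_add {g : S} (hg : g *. g = g) : g +. g = g := by
  nth_rewrite 2 [← idem_E B hg]
  exact add_E B g

theorem idem_neg (hcomm : ∀ a b : S, B.add a b = B.add b a) {g : S} (hg : g *. g = g) :
    -.g = g := by
  have h : (g +. g) +. g = g := by rw [idem_add B hg, idem_add B hg]
  exact (B.neg_unique g g h h).symm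

theorem neg_idem_mul (hcomm : ∀ a b : S, B.add a b = B.add b a) {g : S}
    (hg : g *. g = g) (y : S) : -.(g *. y) = (g +. g *. -.y) +. g := by
  haveI : Std.Commutative B.add := ⟨hcomm⟩
  have hgneg := idem_neg B hcomm hg
  have s1 := B.dist g (y +. -.y) y
  rw [B.add_reg, B.dist g y (-.y), hgneg] at s1
  have s2 := B.dist g (-.y +. y) (-.y)
  rw [B.neg_reg, B.dist g (-.y) y, hgneg] at s2
  refine (B.neg_unique (g *. y) ((g +. g *. -.y) +. g) ?_ ?_).symm
  · calc (g *. y +. ((g +. g *. -.y) +. g)) +. g *. y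
        = (((g *. y +. g) +. g *. -.y) +. g) +. g *. y := by ac_rfl
      _ = g *. y := by rw [← s1]
  · calc (((g +. g *. -.y) +. g) +. g *. y) +. ((g +. g *. -.y) +. g)
        = (g +. ((((g *. -.y +. g) +. g *. y) +. g) +. g *. -.y)) +. g := by ac_rfl
      _ = (g +. g *. -.y) +. g := by rw [← s2]

theorem idem_abs (hcomm : ∀ a b : S, B.add a b = B.add b a) {g : S}
    (hg : g *. g = g) (y : S) : g +. g *. y = g *. y := by
  haveI : Std.Commutative B.add := ⟨hcomm⟩
  have hgadd := idem_add B hg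
  have hu := add_E B (g *. y)
  rw [neg_idem_mul B hcomm hg y] at hu
  calc g +. g *. y
      = g +. (g *. y +. (((g +. g *. -.y) +. g) +. g *. y)) := by rw [hu]
    _ = g *. y +. ((((g +. g) +. g *. -.y) +. g) +. g *. y) := by ac_rfl
    _ = g *. y +. (((g +. g *. -.y) +. g) +. g *. y) := by rw [hgadd]
    _ = g *. y := hu

theorem abs_left (hcomm : ∀ a b : S, B.add a b = B.add b a) (a b : S) :
    (-.a +. a) +. a *. b = a *. b := by
  have h1 : (a *. aᵛ) *. (a *. b) = a *. b := by
    rw [← B.mul_assoc, B.mul_reg]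
  calc (-.a +. a) +. a *. b
      = (a *. aᵛ) +. a *. b := by rw [B.weak a]
    _ = (a *. aᵛ) +. (a *. aᵛ) *. (a *. b) := by rw [h1]
    _ = (a *. aᵛ) *. (a *. b) := idem_abs B hcomm (mul_inv_idem B a) _
    _ = a *. b := h1

theorem abs_right (hcomm : ∀ a b : S, B.add a b = B.add b a) (a b : S) :
    (-.b +. b) +. a *. b = a *. b := by
  have h1 : (b *. bᵛ) *. (a *. b) = a *. b := by
    calc (b *. bᵛ) *. (a *. b)
        = ((b *. bᵛ) *. a) *. b := by ac_rfl
      _ = (a *. (b *. bᵛ)) *. b := by rw [idem_central B (mul_inv_idem B b) a]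
      _ = a *. ((b *. bᵛ) *. b) := by ac_rfl
      _ = a *. b := by rw [B.mul_reg]
  calc (-.b +. b) +. a *. b
      = (b *. bᵛ) +. a *. b := by rw [B.weak b]
    _ = (b *. bᵛ) +. (b *. bᵛ) *. (a *. b) := by rw [h1]
    _ = (b *. bᵛ) *. (a *. b) := idem_abs B hcomm (mul_inv_idem B b) _
    _ = a *. b := h1

theorem idem_mul_eq_add (hcomm : ∀ a b : S, B.add a b = B.add b a) {e f : S}
    (he : e *. e = e) (hf : f *. f = f) : e *. f = e +. f := by
  haveI : Std.Commutative B.add := ⟨hcomm⟩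
  have hene := idem_neg B hcomm he
  have hfne := idem_neg B hcomm hf
  have headd := idem_add B he
  have hfadd := idem_add B hf
  have hg := idem_mul_idem B he hf
  have hgadd := idem_add B hg
  have hhne : -.(e +. f) = e +. f := by rw [neg_add B hcomm, hene, hfne]
  have hhadd : (e +. f) +. (e +. f) = e +. f := by
    calc (e +. f) +. (e +. f) = (e +. e) +. (f +. f) := by ac_rfl
      _ = e +. f := by rw [headd, hfadd]
  have hhinv : (e +. f) *. (e +. f)ᵛ = e +. f := by
    rw [B.weak (e +. f), hhne, hhadd]
  have hhmul : (e +. f) *. (e +. f) = e +. f := by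
    nth_rewrite 1 [← hhinv]
    exact B.mul_reg (e +. f)
  have heh : e *. (e +. f) = e *. f := by
    rw [B.dist e e f, he, hene, headd]
    exact idem_abs B hcomm he f
  have hfg : f +. e *. f = e *. f := by
    rw [idem_comm B he hf]
    exact idem_abs B hcomm hf e
  have heg : e +. e *. f = e *. f := idem_abs B hcomm he f
  have hfh : f *. (e +. f) = e *. f := by
    rw [B.dist f e f, hf, hfne, idem_comm B hf he]
    calc (e *. f +. f) +. f = f +. (f +. e *. f) := by ac_rfl
      _ = e *. f := by rw [hfg, hfg]
  have hhg : (e +. f) +. e *. f = e *. f := by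
    calc (e +. f) +. e *. f = e +. (f +. e *. f) := by ac_rfl
      _ = e +. e *. f := by rw [hfg]
      _ = e *. f := heg
  have main : e +. f = (e *. f +. (e +. f)) +. e *. f := by
    calc e +. f = (e +. f) *. (e +. f) := hhmul.symm
      _ = ((e +. f) *. e +. -.(e +. f)) +. (e +. f) *. f := B.dist _ _ _
      _ = (e *. (e +. f) +. (e +. f)) +. f *. (e +. f) := by
            rw [hhne, idem_central B he (e +. f), idem_central B hf (e +. f)]
      _ = (e *. f +. (e +. f)) +. e *. f := by rw [heh, hfh]
  refine (calc e +. f = (e *. f +. (e +. f)) +. e *. f := main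
    _ = ((e +. f) +. e *. f) +. e *. f := by ac_rfl
    _ = e *. f +. e *. f := by rw [hhg]
    _ = e *. f := hgadd).symm

theorem E_mul (hcomm : ∀ a b : S, B.add a b = B.add b a) (a b : S) :
    -.(a *. b) +. a *. b = (-.a +. a) +. (-.b +. b) := by
  calc -.(a *. b) +. a *. b
      = (a *. b) *. (a *. b)ᵛ := (B.weak (a *. b)).symm
    _ = (a *. b) *. (bᵛ *. aᵛ) := by rw [inv_mul]
    _ = a *. ((b *. bᵛ) *. aᵛ) := by ac_rfl
    _ = a *. (aᵛ *. (b *. bᵛ)) := by rw [idem_central B (mul_inv_idem B b) (aᵛ)]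
    _ = (a *. aᵛ) *. (b *. bᵛ) := by ac_rfl
    _ = (a *. aᵛ) +. (b *. bᵛ) :=
        idem_mul_eq_add B hcomm (mul_inv_idem B a) (mul_inv_idem B b)
    _ = (-.a +. a) +. (-.b +. b) := by rw [B.weak a, B.weak b]

theorem mul_neg (hcomm : ∀ a b : S, B.add a b = B.add b a) (a b : S) :
    a *. -.b = (a +. a) +. -.(a *. b) := by
  haveI : Std.Commutative B.add := ⟨hcomm⟩
  calc a *. -.b
      = (-.a +. a) +. a *. -.b := (abs_left B hcomm a (-.b)).symm
    _ = a +. (-.a +. a *. -.b) := by ac_rfl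
    _ = a +. -.(-.a +. a *. b) := by rw [lam_neg]
    _ = a +. (-.(-.a) +. -.(a *. b)) := by rw [neg_add B hcomm]
    _ = a +. (a +. -.(a *. b)) := by rw [neg_invo B]
    _ = (a +. a) +. -.(a *. b) := by rw [← B.add_assoc]

section DrLemmas

theorem Dr_neg_mul (hcomm : ∀ a b : S, B.add a b = B.add b a) {z : S}
    (hz : ∀ a b, (a +. b) *. z = (a *. z +. -.z) +. b *. z) (x : S) :
    (-.x) *. z = (-.(x *. z) +. z) +. z := by
  haveI : Std.Commutative B.add := ⟨hcomm⟩
  have e1 := hz (x +. -.x) x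
  rw [B.add_reg, hz x (-.x)] at e1
  have e2 := hz (-.x +. x) (-.x)
  rw [B.neg_reg, hz (-.x) x] at e2
  have h1 : ((x *. z +. -.z) +. ((-.x) *. z +. -.z)) +. (x *. z +. -.z)
      = x *. z +. -.z := by
    calc ((x *. z +. -.z) +. ((-.x) *. z +. -.z)) +. (x *. z +. -.z)
        = ((((x *. z +. -.z) +. (-.x) *. z) +. -.z) +. x *. z) +. -.z := by ac_rfl
      _ = x *. z +. -.z := by rw [← e1]
  have h2 : (((-.x) *. z +. -.z) +. (x *. z +. -.z)) +. ((-.x) *. z +. -.z)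
      = (-.x) *. z +. -.z := by
    calc (((-.x) *. z +. -.z) +. (x *. z +. -.z)) +. ((-.x) *. z +. -.z)
        = (((((-.x) *. z +. -.z) +. x *. z) +. -.z) +. (-.x) *. z) +. -.z := by ac_rfl
      _ = (-.x) *. z +. -.z := by rw [← e2]
  have hneg : (-.x) *. z +. -.z = -.(x *. z +. -.z) :=
    B.neg_unique (x *. z +. -.z) ((-.x) *. z +. -.z) h1 h2
  calc (-.x) *. z
      = (-.z +. z) +. (-.x) *. z := (abs_right B hcomm (-.x) z).symm
    _ = ((-.x) *. z +. -.z) +. z := by ac_rfl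
    _ = -.(x *. z +. -.z) +. z := by rw [hneg]
    _ = (-.(x *. z) +. -.(-.z)) +. z := by rw [neg_add B hcomm]
    _ = (-.(x *. z) +. z) +. z := by rw [neg_invo B]

theorem Ew_abs (hcomm : ∀ a b : S, B.add a b = B.add b a) (z w : S) : (-.w +. w) +. -.(z *. w) = -.(z *. w) := by
  haveI : Std.Commutative B.add := ⟨hcomm⟩
  have k : -.(z *. w) +. (-.(z *. w) +. z *. w) = -.(z *. w) := by
    have h := add_E B (-.(z *. w))
    rw [neg_invo B] at h
    calc -.(z *. w) +. (-.(z *. w) +. z *. w)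
        = -.(z *. w) +. (z *. w +. -.(z *. w)) := by ac_rfl
      _ = -.(z *. w) := h
  have k2 : -.(z *. w) = -.(z *. w) +. ((-.z +. z) +. (-.w +. w)) := by
    rw [← E_mul B hcomm z w]
    exact k.symm
  calc (-.w +. w) +. -.(z *. w)
      = (-.w +. w) +. (-.(z *. w) +. ((-.z +. z) +. (-.w +. w))) := by
        nth_rewrite 1 [k2]; rfl
    _ = -.(z *. w) +. ((-.z +. z) +. ((-.w +. w) +. (-.w +. w))) := by ac_rfl
    _ = -.(z *. w) +. ((-.z +. z) +. (-.w +. w)) := by rw [E_idem B w]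
    _ = -.(z *. w) := k2.symm

theorem Dr_add (hcomm : ∀ a b : S, B.add a b = B.add b a) {z w : S}
    (hz : ∀ a b, (a +. b) *. z = (a *. z +. -.z) +. b *. z)
    (hw : ∀ a b, (a +. b) *. w = (a *. w +. -.w) +. b *. w) (a b : S) :
    (a +. b) *. (z +. w) = ((a *. (z +. w)) +. -.(z +. w)) +. b *. (z +. w) := by
  haveI : Std.Commutative B.add := ⟨hcomm⟩
  rw [B.dist (a +. b) z w, hz a b, hw a b, neg_add B hcomm a b,
    B.dist a z w, B.dist b z w, neg_add B hcomm z w]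
  ac_rfl

theorem Dr_neg (hcomm : ∀ a b : S, B.add a b = B.add b a) {z : S}
    (hz : ∀ a b, (a +. b) *. z = (a *. z +. -.z) +. b *. z) (a b : S) :
    (a +. b) *. (-.z) = ((a *. (-.z)) +. -.(-.z)) +. b *. (-.z) := by
  haveI : Std.Commutative B.add := ⟨hcomm⟩
  rw [mul_neg B hcomm (a +. b) z, mul_neg B hcomm a z, mul_neg B hcomm b z,
    hz a b, neg_add B hcomm (a *. z +. -.z) (b *. z), neg_add B hcomm (a *. z) (-.z),
    neg_invo B z]
  ac_rfl

theorem Dr_mul (hcomm : ∀ a b : S, B.add a b = B.add b a) {z w : S}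
    (hz : ∀ a b, (a +. b) *. z = (a *. z +. -.z) +. b *. z)
    (hw : ∀ a b, (a +. b) *. w = (a *. w +. -.w) +. b *. w) (a b : S) :
    (a +. b) *. (z *. w) = ((a *. (z *. w)) +. -.(z *. w)) +. b *. (z *. w) := by
  haveI : Std.Commutative B.add := ⟨hcomm⟩
  calc (a +. b) *. (z *. w)
      = ((a +. b) *. z) *. w := (B.mul_assoc _ _ _).symm
    _ = ((a *. z +. -.z) +. b *. z) *. w := by rw [hz a b]
    _ = ((a *. z +. -.z) *. w +. -.w) +. (b *. z) *. w := hw _ _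
    _ = ((((a *. z) *. w +. -.w) +. (-.z) *. w) +. -.w) +. (b *. z) *. w := by
        rw [hw (a *. z) (-.z)]
    _ = ((((a *. z) *. w +. -.w) +. ((-.(z *. w) +. w) +. w)) +. -.w) +. (b *. z) *. w := by
        rw [Dr_neg_mul B hcomm hw z]
    _ = (((a *. (z *. w) +. -.w) +. ((-.(z *. w) +. w) +. w)) +. -.w) +. b *. (z *. w) := by
        rw [B.mul_assoc a z w, B.mul_assoc b z w]
    _ = (a *. (z *. w) +. (((-.w +. w) +. (-.w +. w)) +. -.(z *. w))) +. b *. (z *. w) := by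
        ac_rfl
    _ = (a *. (z *. w) +. ((-.w +. w) +. -.(z *. w))) +. b *. (z *. w) := by
        rw [E_idem B w]
    _ = (a *. (z *. w) +. -.(z *. w)) +. b *. (z *. w) := by rw [Ew_abs B hcomm z w]

theorem Dr_inv (hcomm : ∀ a b : S, B.add a b = B.add b a) {z : S}
    (hz : ∀ a b, (a +. b) *. z = (a *. z +. -.z) +. b *. z) (a b : S) :
    (a +. b) *. zᵛ = ((a *. zᵛ) +. -.(zᵛ)) +. b *. zᵛ := by
  haveI : Std.Commutative B.add := ⟨hcomm⟩
  have hεidem := mul_inv_idem B z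
  have hεneg : -.(z *. zᵛ) = z *. zᵛ := idem_neg B hcomm hεidem
  have hεadd : (z *. zᵛ) +. (z *. zᵛ) = z *. zᵛ := idem_add B hεidem
  have hcl : zᵛ *. z = z *. zᵛ := (B.clifford z).symm
  have hεzi : (z *. zᵛ) *. zᵛ = zᵛ := by
    calc (z *. zᵛ) *. zᵛ = zᵛ *. (z *. zᵛ) := idem_central B hεidem (zᵛ)
      _ = (zᵛ *. z) *. zᵛ := by ac_rfl
      _ = zᵛ := B.inv_reg z
  have hXrec : ∀ c : S, ((c *. zᵛ) *. z) *. zᵛ = c *. zᵛ := by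
    intro c
    calc ((c *. zᵛ) *. z) *. zᵛ = c *. ((zᵛ *. z) *. zᵛ) := by ac_rfl
      _ = c *. zᵛ := by rw [B.inv_reg]
  have hεmul : ∀ c : S, (z *. zᵛ) *. (c *. zᵛ) = c *. zᵛ := by
    intro c
    calc (z *. zᵛ) *. (c *. zᵛ) = ((z *. zᵛ) *. c) *. zᵛ := by ac_rfl
      _ = (c *. (z *. zᵛ)) *. zᵛ := by rw [idem_central B hεidem c]
      _ = c *. ((z *. zᵛ) *. zᵛ) := by ac_rfl
      _ = c *. zᵛ := by rw [hεzi]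
  have hεabs : (z *. zᵛ) +. -.(zᵛ) = -.(zᵛ) := by
    have hεinv : -.(zᵛ) +. zᵛ = z *. zᵛ := by
      have h := B.weak (zᵛ)
      rw [inv_invo B z, hcl] at h
      exact h.symm
    rw [← hεinv]
    exact B.neg_reg (zᵛ)
  have hmid : (a +. b) *. (z *. zᵛ) = a *. (z *. zᵛ) +. b *. (z *. zᵛ) := by
    calc (a +. b) *. (z *. zᵛ)
        = (z *. zᵛ) *. (a +. b) := (idem_central B hεidem (a +. b)).symm
      _ = ((z *. zᵛ) *. a +. -.(z *. zᵛ)) +. (z *. zᵛ) *. b := B.dist _ a b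
      _ = (z *. zᵛ) *. a +. ((z *. zᵛ) +. (z *. zᵛ) *. b) := by rw [hεneg, B.add_assoc]
      _ = (z *. zᵛ) *. a +. (z *. zᵛ) *. b := by rw [idem_abs B hcomm hεidem b]
      _ = a *. (z *. zᵛ) +. b *. (z *. zᵛ) := by
          rw [idem_central B hεidem a, idem_central B hεidem b]
  have hXz : ((a +. b) *. zᵛ) *. z = (a +. b) *. (z *. zᵛ) := by
    rw [B.mul_assoc, hcl]
  have hTz : (((a *. zᵛ) +. -.(zᵛ)) +. b *. zᵛ) *. z
      = a *. (z *. zᵛ) +. b *. (z *. zᵛ) := by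
    calc (((a *. zᵛ) +. -.(zᵛ)) +. b *. zᵛ) *. z
        = (((a *. zᵛ) +. -.(zᵛ)) *. z +. -.z) +. (b *. zᵛ) *. z := hz _ _
      _ = ((((a *. zᵛ) *. z +. -.z) +. (-.(zᵛ)) *. z) +. -.z) +. (b *. zᵛ) *. z := by
          rw [hz (a *. zᵛ) (-.(zᵛ))]
      _ = (((a *. (z *. zᵛ) +. -.z) +. (-.(zᵛ)) *. z) +. -.z) +. b *. (z *. zᵛ) := by
          rw [B.mul_assoc a (zᵛ) z, B.mul_assoc b (zᵛ) z, hcl]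
      _ = (((a *. (z *. zᵛ) +. -.z) +. ((-.(zᵛ *. z) +. z) +. z)) +. -.z) +. b *. (z *. zᵛ) := by
          rw [Dr_neg_mul B hcomm hz (zᵛ)]
      _ = (((a *. (z *. zᵛ) +. -.z) +. (((z *. zᵛ) +. z) +. z)) +. -.z) +. b *. (z *. zᵛ) := by
          rw [hcl, hεneg]
      _ = (a *. (z *. zᵛ) +. (((-.z +. z) +. (-.z +. z)) +. ((z *. zᵛ) +. b *. (z *. zᵛ)))) := by
          ac_rfl
      _ = (a *. (z *. zᵛ) +. (((z *. zᵛ) +. (z *. zᵛ)) +. ((z *. zᵛ) +. b *. (z *. zᵛ)))) := by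
          rw [← B.weak z]
      _ = (a *. (z *. zᵛ) +. ((z *. zᵛ) +. ((z *. zᵛ) +. b *. (z *. zᵛ)))) := by rw [hεadd]
      _ = (a *. (z *. zᵛ) +. ((z *. zᵛ) +. ((z *. zᵛ) +. (z *. zᵛ) *. b))) := by
          rw [← idem_central B hεidem b]
      _ = a *. (z *. zᵛ) +. (z *. zᵛ) *. b := by
          rw [idem_abs B hcomm hεidem b, idem_abs B hcomm hεidem b]
      _ = a *. (z *. zᵛ) +. b *. (z *. zᵛ) := by rw [idem_central B hεidem b]
  calc (a +. b) *. zᵛ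
      = (((a +. b) *. zᵛ) *. z) *. zᵛ := (hXrec (a +. b)).symm
    _ = ((a +. b) *. (z *. zᵛ)) *. zᵛ := by rw [hXz]
    _ = (a *. (z *. zᵛ) +. b *. (z *. zᵛ)) *. zᵛ := by rw [hmid]
    _ = ((((a *. zᵛ) +. -.(zᵛ)) +. b *. zᵛ) *. z) *. zᵛ := by rw [hTz]
    _ = (((a *. zᵛ) +. -.(zᵛ)) +. b *. zᵛ) *. (z *. zᵛ) := B.mul_assoc _ _ _
    _ = (z *. zᵛ) *. (((a *. zᵛ) +. -.(zᵛ)) +. b *. zᵛ) :=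
        (idem_central B hεidem _).symm
    _ = ((z *. zᵛ) *. ((a *. zᵛ) +. -.(zᵛ)) +. -.(z *. zᵛ)) +. (z *. zᵛ) *. (b *. zᵛ) :=
        B.dist _ _ _
    _ = ((((z *. zᵛ) *. (a *. zᵛ) +. -.(z *. zᵛ)) +. (z *. zᵛ) *. (-.(zᵛ))) +. -.(z *. zᵛ))
          +. (z *. zᵛ) *. (b *. zᵛ) := by rw [B.dist (z *. zᵛ) (a *. zᵛ) (-.(zᵛ))]
    _ = (((a *. zᵛ +. (z *. zᵛ)) +. (z *. zᵛ) *. (-.(zᵛ))) +. (z *. zᵛ)) +. b *. zᵛ := by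
        rw [hεmul a, hεmul b, hεneg]
    _ = (((a *. zᵛ +. (z *. zᵛ)) +. (((z *. zᵛ) +. (z *. zᵛ)) +. -.((z *. zᵛ) *. zᵛ)))
          +. (z *. zᵛ)) +. b *. zᵛ := by rw [mul_neg B hcomm (z *. zᵛ) (zᵛ)]
    _ = (((a *. zᵛ +. (z *. zᵛ)) +. ((z *. zᵛ) +. -.(zᵛ))) +. (z *. zᵛ)) +. b *. zᵛ := by
        rw [hεadd, hεzi]
    _ = (a *. zᵛ +. ((z *. zᵛ) +. ((z *. zᵛ) +. ((z *. zᵛ) +. -.(zᵛ))))) +. b *. zᵛ := by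
        ac_rfl
    _ = ((a *. zᵛ) +. -.(zᵛ)) +. b *. zᵛ := by rw [hεabs, hεabs, hεabs]

end DrLemmas
end DWBAux2


/-- If the additive Clifford semigroup `(S,+)` of a dual weak brace is commutative, then
`D_r(S)` is closed under `+`, additive inversion, `∘` and `∘`-inversion; in particular it
is a two-sided dual weak subbrace of `S`. -/
theorem statement12 {S : Type*} (B : DualWeakBrace S)
    (hcomm : ∀ a b : S, B.add a b = B.add b a) :
    (∀ z w : S, z ∈ B.Dr → w ∈ B.Dr → B.add z w ∈ B.Dr) ∧
      (∀ z : S, z ∈ B.Dr → B.neg z ∈ B.Dr) ∧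
      (∀ z w : S, z ∈ B.Dr → w ∈ B.Dr → B.mul z w ∈ B.Dr) ∧
      (∀ z : S, z ∈ B.Dr → B.inv z ∈ B.Dr) := by
  refine ⟨?_, ?_, ?_, ?_⟩
  · intro z w hz hw a b
    exact DWBAux2.Dr_add B hcomm hz hw a b
  · intro z hz a b
    exact DWBAux2.Dr_neg B hcomm hz a b
  · intro z w hz hw a b
    exact DWBAux2.Dr_mul B hcomm hz hw a b
  · intro z hz a b
    exact DWBAux2.Dr_inv B hcomm hz a b
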